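/- In a symmetric setting (all agents have the same type set Θ_0 and the same valuation function), let r^0 = r be a non-deficit anonymous Groves mechanism and define the iterative sequence r^{k+1}(θ_{-i}) := ((n−1)/n)·r^k(θ_{-i}) + (1/n)·inf_{θ'_i ∈ Θ_0} { VCG(θ'_i,θ_{-i}) − Σ_{j≠i} r^k(θ'_{-j}) }, where θ' = (θ'_i,θ_{-i}) and all infima are assumed to exist in ℝ. Then for every k: (a) r^k is a permutation-independent function, so each r^k determines an anonymous Groves mechanism; (b) r^k is non-deficit; and (c) r^{k+1}(x) ≥ r^k(x) for every x ∈ Θ_0^{n−1}, i.e., r^k(θ_{-i}) is nondecreasing in k. -/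

import Mathlib

/-!
STATEMENT 9: Symmetric setting: n+1 ≥ 2 agents, common type set Θ, common
valuation v : D → Θ → ℝ, finite nonempty D, efficient decision function f.
Let r⁰ = r be a non-deficit anonymous Groves mechanism (permutation-
independent r : Θ^n → ℝ), and define the iterative sequence
  r^{k+1}(θ_{-i}) = (n/(n+1))·r^k(θ_{-i})
      + (1/(n+1))·inf_{θ'_i ∈ Θ} { VCG(θ') − Σ_{j≠i} r^k(θ'_{-j}) },
θ' = Function.update θ i θ'_i, all infima existing in ℝ (the infimized sets
are assumed bounded below). Here n+1 agents, so (n−1)/n of the paper is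
n/(n+1) and 1/n is 1/(n+1). Then for every k: (a) r^k is permutation
independent (so determines an anonymous Groves mechanism); (b) r^k is
non-deficit; (c) r^{k+1}(x) ≥ r^k(x) for all x.
θ_{-i} is encoded as θ ∘ i.succAbove.
-/

noncomputable def VCGi {N : ℕ} {D : Type} [Fintype D] [Nonempty D]
    {Θ : Type} (v : D → Θ → ℝ) (f : (Fin N → Θ) → D)
    (i : Fin N) (θ : Fin N → Θ) : ℝ :=
  (Finset.univ.sup' Finset.univ_nonempty fun d =>
      ∑ j ∈ Finset.univ.erase i, v d (θ j)) -
    ∑ j ∈ Finset.univ.erase i, v (f θ) (θ j)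

noncomputable def VCGtot {N : ℕ} {D : Type} [Fintype D] [Nonempty D]
    {Θ : Type} (v : D → Θ → ℝ) (f : (Fin N → Θ) → D)
    (θ : Fin N → Θ) : ℝ :=
  ∑ i, VCGi v f i θ

/-! Each step replaces agent `i`'s rebate `r(θ₋ᵢ)` by a convex combination of itself and the
worst case, over `θᵢ`, of the slack `VCG(θ) − Σ_{j≠i} r(θ₋ⱼ)`. Bounding that infimum by the slack
at the true `θᵢ` and summing over `i` shows that the new rebates are non-deficit, whatever `r` is.
Conversely, if `r` is non-deficit the slack is never below `r(θ₋ᵢ)`, so neither is the infimum, and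
the rebates increase. Finally, efficiency makes the VCG revenue a function of welfare maxima only,
hence symmetric in the agents; a permutation fixing agent `i` then preserves the infimum, and the
new rebate function inherits the symmetry of the old one. -/

open Finset Function

def IsPermInvariant {m : ℕ} {Θ β : Type} (g : (Fin m → Θ) → β) : Prop :=
  ∀ (x : Fin m → Θ) (σ : Equiv.Perm (Fin m)), g (x ∘ σ) = g x

section VCG

variable {N : ℕ} {D Θ : Type} [Fintype D] [Nonempty D] (v : D → Θ → ℝ) (f : (Fin N → Θ) → D)

lemma VCGtot_eq_of_efficient (hf : ∀ (θ : Fin N → Θ) (d : D), ∑ i, v d (θ i) ≤ ∑ i, v (f θ) (θ i))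
    (θ : Fin N → Θ) :
    VCGtot v f θ = ∑ i, univ.sup' univ_nonempty (fun d => ∑ j, v d (θ j) - v d (θ i)) -
      (N - 1) * univ.sup' univ_nonempty (fun d => ∑ j, v d (θ j)) := by
  have hmax : ∑ j, v (f θ) (θ j) = univ.sup' univ_nonempty (fun d => ∑ j, v d (θ j)) :=
    le_antisymm (le_sup' (fun d => ∑ j, v d (θ j)) (mem_univ _)) (sup'_le _ _ fun d _ => hf θ d)
  simp only [VCGtot, VCGi, sum_erase_eq_sub (mem_univ _), sum_sub_distrib, sum_const, card_univ,
    Fintype.card_fin, nsmul_eq_mul, hmax]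
  ring

lemma isPermInvariant_VCGtot
    (hf : ∀ (θ : Fin N → Θ) (d : D), ∑ i, v d (θ i) ≤ ∑ i, v (f θ) (θ i)) :
    IsPermInvariant (VCGtot v f) := by
  intro θ π
  have hwelfare : ∀ d, ∑ j, v d (θ (π j)) = ∑ j, v d (θ j) := fun d =>
    Equiv.sum_comp π fun j => v d (θ j)
  simp only [VCGtot_eq_of_efficient v f hf, comp_apply, hwelfare]
  rw [Equiv.sum_comp π fun i => univ.sup' univ_nonempty fun d => ∑ j, v d (θ j) - v d (θ i)]

end VCG

lemma exists_perm_comp_succAbove {n : ℕ} (π : Equiv.Perm (Fin (n+1))) (j : Fin (n+1)) :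
    ∃ σ : Equiv.Perm (Fin n), π ∘ j.succAbove = (π j).succAbove ∘ σ := by
  let τ : {x // x ≠ j} ≃ {x // x ≠ π j} := π.subtypeEquiv fun _ => π.injective.ne_iff.symm
  refine ⟨(finSuccAboveEquiv j).trans (τ.trans (finSuccAboveEquiv (π j)).symm), funext fun m => ?_⟩
  have := congrArg Subtype.val
    ((finSuccAboveEquiv (π j)).apply_symm_apply (τ (finSuccAboveEquiv j m)))
  rw [finSuccAboveEquiv_apply] at this
  exact this.symm

namespace IsPermInvariant

variable {n : ℕ} {Θ : Type} {g : (Fin n → Θ) → ℝ}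

lemma comp_perm_comp_succAbove (hg : IsPermInvariant g) (θ : Fin (n+1) → Θ)
    (π : Equiv.Perm (Fin (n+1))) (j : Fin (n+1)) :
    g ((θ ∘ π) ∘ j.succAbove) = g (θ ∘ (π j).succAbove) := by
  obtain ⟨σ, hσ⟩ := exists_perm_comp_succAbove π j
  rw [comp_assoc, hσ, ← comp_assoc, hg]

lemma sum_comp_succAbove (hg : IsPermInvariant g) :
    IsPermInvariant fun θ : Fin (n+1) → Θ => ∑ i : Fin (n+1), g (θ ∘ i.succAbove) := by
  intro θ π
  simp only [hg.comp_perm_comp_succAbove]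
  exact Equiv.sum_comp π fun i : Fin (n+1) => g (θ ∘ i.succAbove)

end IsPermInvariant

section RebateIteration

variable {n : ℕ} {Θ : Type} {V : (Fin (n+1) → Θ) → ℝ} {g g' : (Fin n → Θ) → ℝ}

variable (V) in
def Nondeficit (g : (Fin n → Θ) → ℝ) : Prop :=
  ∀ θ : Fin (n+1) → Θ, ∑ i : Fin (n+1), g (θ ∘ i.succAbove) ≤ V θ

variable (V) in
def maxRebate (g : (Fin n → Θ) → ℝ) (i : Fin (n+1)) (θ : Fin (n+1) → Θ) : ℝ :=
  V θ - ∑ j ∈ univ.erase i, g (θ ∘ j.succAbove)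

variable (V) in
def maxRebateSet (g : (Fin n → Θ) → ℝ) (i : Fin (n+1)) (θ : Fin (n+1) → Θ) : Set ℝ :=
  {y | ∃ x : Θ, y = maxRebate V g i (update θ i x)}

variable (V) in
def IsRebateStep (g g' : (Fin n → Θ) → ℝ) : Prop :=
  ∀ (i : Fin (n+1)) (θ : Fin (n+1) → Θ),
    g' (θ ∘ i.succAbove) = ((n : ℝ) / (n+1)) * g (θ ∘ i.succAbove) +
      (1 / ((n : ℝ)+1)) * sInf (maxRebateSet V g i θ)

lemma update_comp_succAbove (θ : Fin (n+1) → Θ) (i : Fin (n+1)) (x : Θ) :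
    update θ i x ∘ i.succAbove = θ ∘ i.succAbove := by
  ext m
  exact update_of_ne (i.succAbove_ne m) x θ

lemma Nondeficit.le_maxRebate (hg : Nondeficit V g) (i : Fin (n+1)) (θ : Fin (n+1) → Θ) :
    g (θ ∘ i.succAbove) ≤ maxRebate V g i θ := by
  have h := hg θ
  rw [← add_sum_erase _ _ (mem_univ i)] at h
  rw [maxRebate]
  linarith

lemma Nondeficit.le_sInf_maxRebateSet [Nonempty Θ] (hg : Nondeficit V g) (i : Fin (n+1))
    (θ : Fin (n+1) → Θ) : g (θ ∘ i.succAbove) ≤ sInf (maxRebateSet V g i θ) := by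
  obtain ⟨t⟩ := ‹Nonempty Θ›
  refine le_csInf ⟨_, t, rfl⟩ ?_
  rintro y ⟨x, rfl⟩
  simpa only [update_comp_succAbove] using hg.le_maxRebate i (update θ i x)

lemma sInf_maxRebateSet_le {i : Fin (n+1)} {θ : Fin (n+1) → Θ}
    (hbdd : BddBelow (maxRebateSet V g i θ)) :
    sInf (maxRebateSet V g i θ) ≤ maxRebate V g i θ :=
  csInf_le hbdd ⟨θ i, by rw [update_eq_self]⟩

lemma maxRebate_comp_perm (hV : IsPermInvariant V) (hg : IsPermInvariant g)
    {π : Equiv.Perm (Fin (n+1))} {i : Fin (n+1)} (hπ : π i = i) (θ : Fin (n+1) → Θ) :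
    maxRebate V g i (θ ∘ π) = maxRebate V g i θ := by
  have hsum := hg.sum_comp_succAbove θ π
  simp only at hsum
  rw [maxRebate, maxRebate, sum_erase_eq_sub (mem_univ i), sum_erase_eq_sub (mem_univ i), hV θ π,
    hsum, hg.comp_perm_comp_succAbove, hπ]

lemma maxRebateSet_comp_perm (hV : IsPermInvariant V) (hg : IsPermInvariant g)
    {π : Equiv.Perm (Fin (n+1))} {i : Fin (n+1)} (hπ : π i = i) (θ : Fin (n+1) → Θ) :
    maxRebateSet V g i (θ ∘ π) = maxRebateSet V g i θ := by
  have hupdate : ∀ x, update (θ ∘ π) i x = update θ i x ∘ π := fun x => by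
    rw [← update_comp_eq_of_injective θ π.injective, hπ]
  simp only [maxRebateSet, hupdate, maxRebate_comp_perm hV hg hπ]

namespace IsRebateStep

lemma nondeficit (h : IsRebateStep V g g') (hbdd : ∀ i θ, BddBelow (maxRebateSet V g i θ)) :
    Nondeficit V g' := by
  intro θ
  set S := ∑ i : Fin (n+1), g (θ ∘ i.succAbove)
  have hle : ∀ i : Fin (n+1), g' (θ ∘ i.succAbove) ≤ g (θ ∘ i.succAbove) + (V θ - S) / (n+1) := by
    intro i
    have hmax : maxRebate V g i θ = V θ - S + g (θ ∘ i.succAbove) := by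
      rw [maxRebate, sum_erase_eq_sub (mem_univ i)]; ring
    calc g' (θ ∘ i.succAbove)
        ≤ ((n : ℝ) / (n+1)) * g (θ ∘ i.succAbove) + (1 / ((n : ℝ)+1)) * maxRebate V g i θ := by
          rw [h i θ]
          gcongr
          exact sInf_maxRebateSet_le (hbdd i θ)
      _ = g (θ ∘ i.succAbove) + (V θ - S) / (n+1) := by
          rw [hmax]; field_simp; ring
  calc ∑ i : Fin (n+1), g' (θ ∘ i.succAbove)
      ≤ ∑ i : Fin (n+1), (g (θ ∘ i.succAbove) + (V θ - S) / (n+1)) := sum_le_sum fun i _ => hle i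
    _ = V θ := by
      rw [sum_add_distrib, sum_const, card_univ, Fintype.card_fin, nsmul_eq_mul]
      push_cast
      field_simp
      ring

lemma le_comp_succAbove [Nonempty Θ] (h : IsRebateStep V g g') (hg : Nondeficit V g)
    (i : Fin (n+1)) (θ : Fin (n+1) → Θ) : g (θ ∘ i.succAbove) ≤ g' (θ ∘ i.succAbove) := by
  have hinf := hg.le_sInf_maxRebateSet i θ
  have hconvex : ((n : ℝ) / (n+1)) + 1 / ((n : ℝ)+1) = 1 := by field_simp
  calc g (θ ∘ i.succAbove)
      = ((n : ℝ) / (n+1)) * g (θ ∘ i.succAbove) + (1 / ((n : ℝ)+1)) * g (θ ∘ i.succAbove) := by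
        rw [← add_mul, hconvex, one_mul]
    _ ≤ g' (θ ∘ i.succAbove) := by
        rw [h i θ]
        gcongr

lemma le [Nonempty Θ] (h : IsRebateStep V g g') (hg : Nondeficit V g) (x : Fin n → Θ) :
    g x ≤ g' x := by
  obtain ⟨t⟩ := ‹Nonempty Θ›
  simpa only [Fin.succAbove_zero, Fin.cons_comp_succ] using h.le_comp_succAbove hg 0 (Fin.cons t x)

lemma isPermInvariant [Nonempty Θ] (h : IsRebateStep V g g') (hV : IsPermInvariant V)
    (hg : IsPermInvariant g) : IsPermInvariant g' := by
  intro x σ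
  obtain ⟨t⟩ := ‹Nonempty Θ›
  set θ : Fin (n+1) → Θ := Fin.cons t x
  set π : Equiv.Perm (Fin (n+1)) := Equiv.Perm.decomposeFin.symm (0, σ)
  have hπ : π 0 = 0 := Equiv.Perm.decomposeFin_symm_apply_zero 0 σ
  have hθπ : (θ ∘ π) ∘ (0 : Fin (n+1)).succAbove = x ∘ σ := by
    funext m; simp [θ, π]
  calc g' (x ∘ σ) = g' ((θ ∘ π) ∘ (0 : Fin (n+1)).succAbove) := by rw [hθπ]
    _ = g' (θ ∘ (0 : Fin (n+1)).succAbove) := by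
        rw [h 0, h 0, hg.comp_perm_comp_succAbove, hπ, maxRebateSet_comp_perm hV hg hπ]
    _ = g' x := rfl

end IsRebateStep

end RebateIteration

theorem stmt_9_general {n : ℕ} {D : Type} [Fintype D] [Nonempty D]
    {Θ : Type} [Nonempty Θ]
    (v : D → Θ → ℝ) (f : (Fin (n+1) → Θ) → D)
    (hf : ∀ (θ : Fin (n+1) → Θ) (d : D),
      ∑ i, v d (θ i) ≤ ∑ i, v (f θ) (θ i))
    (r : (Fin n → Θ) → ℝ)
    (hperm : ∀ (x : Fin n → Θ) (σ : Equiv.Perm (Fin n)),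
      r (fun i => x (σ⁻¹ i)) = r x)
    (hnd : ∀ θ : Fin (n+1) → Θ,
      ∑ i : Fin (n+1), r (θ ∘ i.succAbove) ≤ VCGtot v f θ)
    (R : ℕ → (Fin n → Θ) → ℝ) (hR0 : R 0 = r)
    (hbdd : ∀ (k : ℕ) (i : Fin (n+1)) (θ : Fin (n+1) → Θ),
      BddBelow {y : ℝ | ∃ x : Θ, y = VCGtot v f (Function.update θ i x) -
        ∑ j ∈ Finset.univ.erase i, R k (Function.update θ i x ∘ j.succAbove)})
    (hrec : ∀ (k : ℕ) (i : Fin (n+1)) (θ : Fin (n+1) → Θ),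
      R (k+1) (θ ∘ i.succAbove) =
        ((n : ℝ) / (n+1)) * R k (θ ∘ i.succAbove) +
        (1 / ((n : ℝ)+1)) * sInf {y : ℝ | ∃ x : Θ,
          y = VCGtot v f (Function.update θ i x) -
            ∑ j ∈ Finset.univ.erase i, R k (Function.update θ i x ∘ j.succAbove)}) :
    (∀ (k : ℕ) (x : Fin n → Θ) (σ : Equiv.Perm (Fin n)),
      R k (fun i => x (σ⁻¹ i)) = R k x) ∧
    (∀ (k : ℕ) (θ : Fin (n+1) → Θ),
      ∑ i : Fin (n+1), R k (θ ∘ i.succAbove) ≤ VCGtot v f θ) ∧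
    (∀ (k : ℕ) (x : Fin n → Θ), R k x ≤ R (k+1) x) := by
  have hstep : ∀ k, IsRebateStep (VCGtot v f) (R k) (R (k+1)) := hrec
  have hnondeficit : ∀ k, Nondeficit (VCGtot v f) (R k)
    | 0 => hR0 ▸ hnd
    | k + 1 => (hstep k).nondeficit (hbdd k)
  have hinvariant : ∀ k, IsPermInvariant (R k) := by
    intro k
    induction k with
    | zero => rw [hR0]; exact fun x σ => by simpa [comp_def] using hperm x σ⁻¹
    | succ k ih => exact (hstep k).isPermInvariant (isPermInvariant_VCGtot v f hf) ih
  exact ⟨fun k x σ => hinvariant k x σ⁻¹, hnondeficit,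
    fun k => (hstep k).le (hnondeficit k)⟩

theorem stmt_9 {n : ℕ} (hn : 1 ≤ n) {D : Type} [Fintype D] [Nonempty D]
    {Θ : Type} [Nonempty Θ]
    (v : D → Θ → ℝ) (f : (Fin (n+1) → Θ) → D)
    (hf : ∀ (θ : Fin (n+1) → Θ) (d : D),
      ∑ i, v d (θ i) ≤ ∑ i, v (f θ) (θ i))
    (r : (Fin n → Θ) → ℝ)
    (hperm : ∀ (x : Fin n → Θ) (σ : Equiv.Perm (Fin n)),
      r (fun i => x (σ⁻¹ i)) = r x)
    (hnd : ∀ θ : Fin (n+1) → Θ,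
      ∑ i : Fin (n+1), r (θ ∘ i.succAbove) ≤ VCGtot v f θ)
    (R : ℕ → (Fin n → Θ) → ℝ) (hR0 : R 0 = r)
    (hbdd : ∀ (k : ℕ) (i : Fin (n+1)) (θ : Fin (n+1) → Θ),
      BddBelow {y : ℝ | ∃ x : Θ, y = VCGtot v f (Function.update θ i x) -
        ∑ j ∈ Finset.univ.erase i, R k (Function.update θ i x ∘ j.succAbove)})
    (hrec : ∀ (k : ℕ) (i : Fin (n+1)) (θ : Fin (n+1) → Θ),
      R (k+1) (θ ∘ i.succAbove) =
        ((n : ℝ) / (n+1)) * R k (θ ∘ i.succAbove) +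
        (1 / ((n : ℝ)+1)) * sInf {y : ℝ | ∃ x : Θ,
          y = VCGtot v f (Function.update θ i x) -
            ∑ j ∈ Finset.univ.erase i, R k (Function.update θ i x ∘ j.succAbove)}) :
    (∀ (k : ℕ) (x : Fin n → Θ) (σ : Equiv.Perm (Fin n)),
      R k (fun i => x (σ⁻¹ i)) = R k x) ∧
    (∀ (k : ℕ) (θ : Fin (n+1) → Θ),
      ∑ i : Fin (n+1), R k (θ ∘ i.succAbove) ≤ VCGtot v f θ) ∧
    (∀ (k : ℕ) (x : Fin n → Θ), R k x ≤ R (k+1) x) :=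
  stmt_9_general v f hf r hperm hnd R hR0 hbdd hrec
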